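/- The category of Weil k-algebras has finite limits (is left exact): it has a terminal object k, and admits binary products and equalizers, hence all finite limits. -/
import Mathlib

open CategoryTheory TensorProduct Limits

set_option synthInstance.maxHeartbeats 800000
set_option maxHeartbeats 1600000

/-- A Weil algebra over a field `k`: a finite-dimensional local commutative
`k`-algebra equipped with an augmentation whose kernel is nilpotent. -/
structure WeilAlgebra (k : Type) [Field k] : Type 1 where
  carrier : Type
  [commRing : CommRing carrier]
  [algebra : Algebra k carrier]
  [finite : Module.Finite k carrier]
  [isLocal : IsLocalRing carrier]
  aug : carrier →ₐ[k] k
  nilpotent : IsNilpotent (RingHom.ker (aug : carrier →+* k))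

attribute [instance] WeilAlgebra.commRing WeilAlgebra.algebra
  WeilAlgebra.finite WeilAlgebra.isLocal

variable {k : Type} [Field k]

/-- The category of Weil `k`-algebras, with `k`-algebra homomorphisms. -/
instance : Category (WeilAlgebra k) where
  Hom W₁ W₂ := W₁.carrier →ₐ[k] W₂.carrier
  id W := AlgHom.id k W.carrier
  comp f g := g.comp f

namespace WeilAux

/-- An algebra with an augmentation having nilpotent kernel is local. -/
theorem isLocal {A : Type} [CommRing A] [Algebra k A]
    (f : A →ₐ[k] k) (h : IsNilpotent (RingHom.ker (f : A →+* k))) : IsLocalRing A := by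
  obtain ⟨n, hn⟩ := h
  have hnt : Nontrivial A := by
    refine ⟨1, 0, fun h10 => ?_⟩
    have := congrArg f h10
    simp at this
  have key : ∀ a : A, f a ≠ 0 → IsUnit a := by
    intro a ha
    have h1 : IsUnit (algebraMap k A (f a)) := (isUnit_iff_ne_zero.mpr ha).map _
    have h2 : IsNilpotent (a - algebraMap k A (f a)) := by
      refine ⟨n, ?_⟩
      have hm : a - algebraMap k A (f a) ∈ RingHom.ker (f : A →+* k) := by
        simp [RingHom.mem_ker]
      have := Ideal.pow_mem_pow hm n
      rwa [hn, Ideal.zero_eq_bot, Ideal.mem_bot] at this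
    have := h2.isUnit_add_right_of_commute h1 (Commute.all _ _)
    rwa [sub_add_cancel] at this
  refine IsLocalRing.of_isUnit_or_isUnit_one_sub_self fun a => ?_
  by_cases ha : f a = 0
  · right; exact key _ (by simp [ha])
  · left; exact key _ ha

/-- Any `k`-algebra map from a Weil algebra to `k` is the augmentation. -/
theorem augUnique (W : WeilAlgebra k) (f : W.carrier →ₐ[k] k) : f = W.aug := by
  have hker : ∀ (g : W.carrier →ₐ[k] k),
      RingHom.ker (g : W.carrier →+* k) = IsLocalRing.maximalIdeal W.carrier := by
    intro g
    refine IsLocalRing.eq_maximalIdeal (RingHom.ker_isMaximal_of_surjective _ ?_)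
    intro c; exact ⟨algebraMap k W.carrier c, by simp⟩
  ext x
  have hx : x - algebraMap k W.carrier (W.aug x) ∈ RingHom.ker (W.aug : W.carrier →+* k) := by
    simp [RingHom.mem_ker]
  rw [hker W.aug, ← hker f, RingHom.mem_ker] at hx
  have : f x - W.aug x = 0 := by simpa using hx
  exact sub_eq_zero.mp this

/-- Nilpotency of the augmentation kernel pulled back along an injection. -/
theorem nilpotent_of_inj {A B : Type} [CommRing A] [CommRing B]
    [Algebra k A] [Algebra k B] (ι : A →ₐ[k] B) (hι : Function.Injective ι)
    (f : A →ₐ[k] k) (J : Ideal B) (hJ : IsNilpotent J)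
    (hsub : RingHom.ker (f : A →+* k) ≤ J.comap (ι : A →+* B)) :
    IsNilpotent (RingHom.ker (f : A →+* k)) := by
  obtain ⟨n, hn⟩ := hJ
  refine ⟨n, ?_⟩
  have h1 : RingHom.ker (f : A →+* k) ^ n ≤ (J.comap (ι : A →+* B)) ^ n :=
    Ideal.pow_right_mono hsub n
  have h2 : (J.comap (ι : A →+* B)) ^ n ≤ (J ^ n).comap (ι : A →+* B) :=
    Ideal.le_comap_pow _ n
  have h3 : (J ^ n).comap (ι : A →+* B) = ⊥ := by
    rw [hn, Ideal.zero_eq_bot, ← RingHom.ker_eq_comap_bot]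
    exact (RingHom.injective_iff_ker_eq_bot _).mp hι
  exact le_bot_iff.mp (le_trans h1 (h3 ▸ h2))

/-- The product of nilpotent ideals is nilpotent. -/
theorem prod_nilpotent {R S : Type} [CommRing R] [CommRing S]
    {I : Ideal R} {J : Ideal S} (hI : IsNilpotent I) (hJ : IsNilpotent J) :
    IsNilpotent (Ideal.prod I J) := by
  obtain ⟨n, hn⟩ := hI
  obtain ⟨m, hm⟩ := hJ
  refine ⟨n + m, ?_⟩
  have key : ∀ p : ℕ, (Ideal.prod I J) ^ p ≤ Ideal.prod (I ^ p) (J ^ p) := by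
    intro p
    induction p with
    | zero => simp
    | succ p ih =>
      rw [pow_succ, pow_succ, pow_succ]
      refine Ideal.mul_le.mpr fun r hr s hs => ?_
      exact ⟨Ideal.mul_mem_mul (ih hr).1 hs.1, Ideal.mul_mem_mul (ih hr).2 hs.2⟩
  have hIn : I ^ (n + m) = ⊥ := by
    rw [pow_add, hn, Ideal.zero_eq_bot, Ideal.bot_mul]
  have hJm : J ^ (n + m) = ⊥ := by
    rw [pow_add, hm, Ideal.zero_eq_bot, Ideal.mul_bot]
  have : Ideal.prod (I ^ (n + m)) (J ^ (n + m)) ≤ ⊥ := by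
    rw [hIn, hJm]
    rintro ⟨a, b⟩ ⟨ha, hb⟩
    simp only [Ideal.mem_bot] at ha hb ⊢
    exact Prod.ext ha hb
  rw [Ideal.zero_eq_bot]
  exact le_bot_iff.mp (le_trans (key (n + m)) this)

/-- `k` itself as a Weil algebra: the terminal object. -/
def term : WeilAlgebra k where
  carrier := k
  aug := AlgHom.id k k
  nilpotent := ⟨1, by
    rw [pow_one, Ideal.zero_eq_bot]
    exact (RingHom.injective_iff_ker_eq_bot _).mp fun a b h => h⟩

/-- The fibered product subalgebra. -/
def prodSub (W₁ W₂ : WeilAlgebra k) : Subalgebra k (W₁.carrier × W₂.carrier) :=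
  AlgHom.equalizer (W₁.aug.comp (AlgHom.fst k W₁.carrier W₂.carrier))
    (W₂.aug.comp (AlgHom.snd k W₁.carrier W₂.carrier))

noncomputable instance finSub {A : Type} [CommRing A] [Algebra k A] [Module.Finite k A]
    (S : Subalgebra k A) : Module.Finite k S := by
  have : FiniteDimensional k A := inferInstance
  have : FiniteDimensional k (Subalgebra.toSubmodule S) := inferInstance
  exact this

/-- The augmentation of the fibered product. -/
def prodAug (W₁ W₂ : WeilAlgebra k) : (prodSub W₁ W₂) →ₐ[k] k :=
  (W₁.aug.comp (AlgHom.fst k W₁.carrier W₂.carrier)).comp (prodSub W₁ W₂).val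

theorem prodAug_nilpotent (W₁ W₂ : WeilAlgebra k) :
    IsNilpotent (RingHom.ker ((prodAug W₁ W₂ : ↥(prodSub W₁ W₂) →ₐ[k] k) :
      ↥(prodSub W₁ W₂) →+* k)) := by
  refine nilpotent_of_inj (prodSub W₁ W₂).val Subtype.val_injective _
    (Ideal.prod (RingHom.ker (W₁.aug : W₁.carrier →+* k))
      (RingHom.ker (W₂.aug : W₂.carrier →+* k)))
    (prod_nilpotent W₁.nilpotent W₂.nilpotent) ?_
  intro x hx
  have h1 : W₁.aug (x : W₁.carrier × W₂.carrier).1 = 0 := hx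
  have h2 : W₂.aug (x : W₁.carrier × W₂.carrier).2 = 0 := by
    have hmem : W₁.aug (x : W₁.carrier × W₂.carrier).1
        = W₂.aug (x : W₁.carrier × W₂.carrier).2 := x.2
    rw [← hmem]
    exact h1
  exact ⟨h1, h2⟩

/-- The fibered product of two Weil algebras. -/
noncomputable def prodObj (W₁ W₂ : WeilAlgebra k) : WeilAlgebra k where
  carrier := prodSub W₁ W₂
  isLocal := isLocal (prodAug W₁ W₂) (prodAug_nilpotent W₁ W₂)
  aug := prodAug W₁ W₂
  nilpotent := prodAug_nilpotent W₁ W₂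

/-- Hom as an algebra map. -/
def toAlg {W₁ W₂ : WeilAlgebra k} (f : W₁ ⟶ W₂) : W₁.carrier →ₐ[k] W₂.carrier := f

/-- The equalizer subalgebra of two morphisms. -/
def eqAug {W₁ W₂ : WeilAlgebra k} (f g : W₁ ⟶ W₂) :
    (AlgHom.equalizer (toAlg f) (toAlg g) : Subalgebra k W₁.carrier) →ₐ[k] k :=
  W₁.aug.comp (AlgHom.equalizer (toAlg f) (toAlg g)).val

theorem eqAug_nilpotent {W₁ W₂ : WeilAlgebra k} (f g : W₁ ⟶ W₂) :
    IsNilpotent (RingHom.ker ((eqAug f g)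
      : (AlgHom.equalizer (toAlg f) (toAlg g) : Subalgebra k W₁.carrier) →+* k)) := by
  refine nilpotent_of_inj (AlgHom.equalizer (toAlg f) (toAlg g)).val
    Subtype.val_injective _ (RingHom.ker (W₁.aug : W₁.carrier →+* k)) W₁.nilpotent ?_
  intro x hx
  exact hx

/-- The equalizer of two morphisms of Weil algebras. -/
noncomputable def eqObj {W₁ W₂ : WeilAlgebra k} (f g : W₁ ⟶ W₂) : WeilAlgebra k where
  carrier := AlgHom.equalizer (toAlg f) (toAlg g)
  isLocal := isLocal (eqAug f g) (eqAug_nilpotent f g)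
  aug := eqAug f g
  nilpotent := eqAug_nilpotent f g

end WeilAux

open WeilAux in
/-- The category of Weil `k`-algebras is left exact. -/
theorem weilAlgebra_hasFiniteLimits :
    HasTerminal (WeilAlgebra k) ∧ HasBinaryProducts (WeilAlgebra k) ∧
      HasEqualizers (WeilAlgebra k) ∧ HasFiniteLimits (WeilAlgebra k) := by
  -- terminal object
  have hT : IsTerminal (term : WeilAlgebra k) :=
    IsTerminal.ofUniqueHom (fun W => (W.aug : W ⟶ term)) (fun W m => augUnique W m)
  haveI hterm : HasTerminal (WeilAlgebra k) := hT.hasTerminal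
  -- binary products
  haveI hpair : ∀ {X Y : WeilAlgebra k}, HasLimit (pair X Y) := by
    intro X Y
    refine HasLimit.mk ⟨BinaryFan.mk
      (P := prodObj X Y)
      (((AlgHom.fst k X.carrier Y.carrier).comp (prodSub X Y).val : (prodObj X Y) ⟶ X))
      (((AlgHom.snd k X.carrier Y.carrier).comp (prodSub X Y).val : (prodObj X Y) ⟶ Y)),
      BinaryFan.IsLimit.mk _ ?_ ?_ ?_ ?_⟩
    · -- lift
      intro T f g
      refine (AlgHom.codRestrict (AlgHom.prod (toAlg f) (toAlg g)) (prodSub X Y) ?_ :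
        T ⟶ prodObj X Y)
      intro x
      have hf : X.aug.comp (toAlg f) = T.aug := augUnique T _
      have hg : Y.aug.comp (toAlg g) = T.aug := augUnique T _
      show X.aug (toAlg f x) = Y.aug (toAlg g x)
      calc X.aug (toAlg f x) = T.aug x := congrArg (fun φ => φ x) hf
        _ = Y.aug (toAlg g x) := (congrArg (fun φ => φ x) hg).symm
    · intro T f g; rfl
    · intro T f g; rfl
    · intro T f g m hm1 hm2
      refine AlgHom.ext fun x => Subtype.ext (Prod.ext ?_ ?_)
      · exact congrArg (fun φ : T.carrier →ₐ[k] X.carrier => φ x) hm1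
      · exact congrArg (fun φ : T.carrier →ₐ[k] Y.carrier => φ x) hm2
  haveI hbp : HasBinaryProducts (WeilAlgebra k) := hasBinaryProducts_of_hasLimit_pair _
  -- equalizers
  haveI hpp : ∀ {X Y : WeilAlgebra k} (f g : X ⟶ Y), HasLimit (parallelPair f g) := by
    intro X Y f g
    refine HasLimit.mk ⟨Fork.ofι (f := f) (g := g) (P := eqObj f g)
      ((AlgHom.equalizer (toAlg f) (toAlg g)).val) ?_,
      Fork.IsLimit.mk _ ?_ ?_ ?_⟩
    · exact AlgHom.ext fun x => x.2
    · intro s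
      refine (AlgHom.codRestrict (toAlg s.ι) (AlgHom.equalizer (toAlg f) (toAlg g))
        (fun x => ?_) : s.pt ⟶ eqObj f g)
      exact congrArg (fun φ : s.pt.carrier →ₐ[k] Y.carrier => φ x) s.condition
    · intro s; rfl
    · intro s m hm
      exact AlgHom.ext fun x => Subtype.ext
        (congrArg (fun φ : s.pt.carrier →ₐ[k] X.carrier => φ x) hm)
  haveI heq : HasEqualizers (WeilAlgebra k) :=
    hasEqualizers_of_hasLimit_parallelPair _
  haveI hfp : HasFiniteProducts (WeilAlgebra k) :=
    hasFiniteProducts_of_has_binary_and_terminal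
  haveI hfl : HasFiniteLimits (WeilAlgebra k) :=
    hasFiniteLimits_of_hasEqualizers_and_finite_products
  exact ⟨hterm, hbp, heq, hfl⟩
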